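/- arXiv:1912.09835 — 3 statements merged into one kernel-verified Lean document; each statement's English description precedes it below -/
import Mathlib

section
/- Let α > 0 and 0 ≤ γ < 2, and let Ω be a bounded measurable subset of ℝ². Suppose (u_j) is a sequence of measurable functions from Ω to ℝ that converges Lebesgue-almost everywhere on Ω to a measurable function u, and suppose sup_j ∫_Ω (u_j⁺(x))² · exp(α (u_j⁺(x))²) · |x|^{-γ} dx < ∞. Then ∫_Ω exp(α (u_j⁺(x))²) · |x|^{-γ} dx converges to ∫_Ω exp(α (u⁺(x))²) · |x|^{-γ} dx as j → ∞. -/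
open MeasureTheory Real Filter Topology
open scoped ENNReal NNReal

/-!
Fatou's lemma gives the lower bound. For the upper bound, truncate at a level `T`: where
`(u_j⁺)² ≤ T` the integrand is dominated by `e^{αT} |x|^{-γ}`, which is integrable on the bounded
set `Ω` because `γ < 2`; where `(u_j⁺)² > T` it is at most `T⁻¹` times the integrand of the
uniformly bounded integrals. Dominated convergence for the truncations, followed by `T → ∞`,
bounds the limsup.
-/

theorem tendsto_lintegral_of_tendsto_ae_of_lintegral_le_min_add {X ι : Type*} [MeasurableSpace X]
    {μ : Measure X} {l : Filter ι} [l.NeBot] [l.IsCountablyGenerated] {f : ι → X → ℝ≥0∞}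
    {F : X → ℝ≥0∞}
    (hf : ∀ i, AEMeasurable (f i) μ) (hlim : ∀ᵐ x ∂μ, Tendsto (fun i => f i x) l (𝓝 (F x)))
    (htrunc : ∀ ε : ℝ≥0, 0 < ε → ∃ D : X → ℝ≥0∞, AEMeasurable D μ ∧ ∫⁻ x, D x ∂μ ≠ ∞ ∧
      ∀ᶠ i in l, ∫⁻ x, f i x ∂μ ≤ ∫⁻ x, min (f i x) (D x) ∂μ + ε) :
    Tendsto (fun i => ∫⁻ x, f i x ∂μ) l (𝓝 (∫⁻ x, F x ∂μ)) := by
  refine tendsto_of_le_liminf_of_limsup_le ?_ ?_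
  · calc ∫⁻ x, F x ∂μ = ∫⁻ x, liminf (fun i => f i x) l ∂μ :=
          lintegral_congr_ae (hlim.mono fun x hx => hx.liminf_eq.symm)
      _ ≤ _ := lintegral_liminf_le' hf
  · refine ENNReal.le_of_forall_pos_le_add fun ε hε _ => ?_
    obtain ⟨D, hDm, hD, hle⟩ := htrunc ε hε
    have htrunc_lim : Tendsto (fun i => ∫⁻ x, min (f i x) (D x) ∂μ) l
        (𝓝 (∫⁻ x, min (F x) (D x) ∂μ)) :=
      tendsto_lintegral_filter_of_dominated_convergence' D
        (Eventually.of_forall fun i => (hf i).min hDm)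
        (Eventually.of_forall fun i => ae_of_all _ fun x => min_le_right _ _) hD
        (hlim.mono fun x hx => hx.min tendsto_const_nhds)
    calc limsup (fun i => ∫⁻ x, f i x ∂μ) l
        ≤ limsup (fun i => ∫⁻ x, min (f i x) (D x) ∂μ + ε) l := limsup_le_limsup hle
      _ = ∫⁻ x, min (F x) (D x) ∂μ + ε := (htrunc_lim.add_const _).limsup_eq
      _ ≤ ∫⁻ x, F x ∂μ + ε := by gcongr; exact min_le_left _ _

theorem integrableOn_norm_rpow_neg_of_isBounded {E : Type*} [NormedAddCommGroup E]
    [NormedSpace ℝ E] [FiniteDimensional ℝ E] [MeasurableSpace E] [BorelSpace E]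
    {μ : Measure E} [μ.IsAddHaarMeasure] (hd : 1 ≤ Module.finrank ℝ E) {γ : ℝ}
    (hγ : γ < Module.finrank ℝ E) {s : Set E} (hs : Bornology.IsBounded s) :
    IntegrableOn (fun x => ‖x‖ ^ (-γ)) s μ := by
  have hloc : LocallyIntegrable (fun x : E => ‖x‖ ^ (-γ)) μ :=
    locallyIntegrable_of_norm_le_rpow (C := 1) hd hγ
      (ae_of_all _ fun x => by rw [one_mul, norm_of_nonneg (rpow_nonneg (norm_nonneg x) _)])
      (measurable_norm.pow_const _).aestronglyMeasurable
  exact (hloc.integrableOn_isCompact hs.isCompact_closure).mono_set subset_closure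

theorem ofReal_exp_mul_sq_le_min_add {α T : ℝ} (hα : 0 ≤ α) (hT : 0 < T) (a : ℝ) {w : ℝ}
    (hw : 0 ≤ w) :
    ENNReal.ofReal (exp (α * a ^ 2) * w) ≤
      min (ENNReal.ofReal (exp (α * a ^ 2) * w)) (ENNReal.ofReal (exp (α * T) * w)) +
        ENNReal.ofReal T⁻¹ * ENNReal.ofReal (a ^ 2 * exp (α * a ^ 2) * w) := by
  rcases le_or_gt (a ^ 2) T with ha | ha
  · have : ENNReal.ofReal (exp (α * a ^ 2) * w) ≤ ENNReal.ofReal (exp (α * T) * w) := by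
      gcongr
    rw [min_eq_left this]
    exact le_self_add
  · refine le_add_left ?_
    rw [← ENNReal.ofReal_mul (by positivity)]
    refine ENNReal.ofReal_le_ofReal ?_
    calc exp (α * a ^ 2) * w = T⁻¹ * (T * (exp (α * a ^ 2) * w)) := by field_simp
      _ ≤ T⁻¹ * (a ^ 2 * exp (α * a ^ 2) * w) := by
        rw [← mul_assoc _ (exp _)]; gcongr

theorem lintegral_ofReal_exp_mul_sq_le {X : Type*} [MeasurableSpace X] (μ : Measure X)
    {α T : ℝ} (hα : 0 ≤ α) (hT : 0 < T) {v w : X → ℝ} (hv : AEMeasurable v μ)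
    (hw : AEMeasurable w μ) (hw0 : ∀ x, 0 ≤ w x) :
    ∫⁻ x, ENNReal.ofReal (exp (α * v x ^ 2) * w x) ∂μ ≤
      ∫⁻ x, min (ENNReal.ofReal (exp (α * v x ^ 2) * w x))
          (ENNReal.ofReal (exp (α * T) * w x)) ∂μ +
        ENNReal.ofReal T⁻¹ * ∫⁻ x, ENNReal.ofReal (v x ^ 2 * exp (α * v x ^ 2) * w x) ∂μ := by
  rw [← lintegral_const_mul' _ _ ENNReal.ofReal_ne_top, ← lintegral_add_right' _ (by fun_prop)]
  exact lintegral_mono fun x => ofReal_exp_mul_sq_le_min_add hα hT (v x) (hw0 x)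

theorem stmt_0_general (α γ : ℝ) (hα : 0 < α) (hγ2 : γ < 2)
    (Ω : Set (EuclideanSpace ℝ (Fin 2)))
    (hΩb : Bornology.IsBounded Ω)
    (u : ℕ → EuclideanSpace ℝ (Fin 2) → ℝ) (u₀ : EuclideanSpace ℝ (Fin 2) → ℝ)
    (hum : ∀ j, Measurable (u j))
    (hae : ∀ᵐ x ∂(volume.restrict Ω), Tendsto (fun j => u j x) atTop (𝓝 (u₀ x)))
    (hsup : (⨆ j, ∫⁻ x in Ω,
        ENNReal.ofReal ((max (u j x) 0) ^ 2 * Real.exp (α * (max (u j x) 0) ^ 2)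
          * ‖x‖ ^ (-γ))) < ⊤) :
    Tendsto (fun j => ∫⁻ x in Ω,
        ENNReal.ofReal (Real.exp (α * (max (u j x) 0) ^ 2) * ‖x‖ ^ (-γ))) atTop
      (𝓝 (∫⁻ x in Ω, ENNReal.ofReal (Real.exp (α * (max (u₀ x) 0) ^ 2) * ‖x‖ ^ (-γ)))) := by
  set C := ⨆ j, ∫⁻ x in Ω,
    ENNReal.ofReal ((max (u j x) 0) ^ 2 * Real.exp (α * (max (u j x) 0) ^ 2) * ‖x‖ ^ (-γ))
  have hweight : IntegrableOn (fun x : EuclideanSpace ℝ (Fin 2) => ‖x‖ ^ (-γ)) Ω :=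
    integrableOn_norm_rpow_neg_of_isBounded (by simp) (by simpa using hγ2) hΩb
  refine tendsto_lintegral_of_tendsto_ae_of_lintegral_le_min_add (fun j => by fun_prop) ?_ ?_
  · filter_upwards [hae] with x hx
    exact ENNReal.tendsto_ofReal
      ((((hx.max tendsto_const_nhds).pow 2).const_mul α).rexp.mul_const _)
  · intro ε hε
    have hsmall : Tendsto (fun T : ℝ => ENNReal.ofReal T⁻¹ * C) atTop (𝓝 0) := by
      simpa using ENNReal.Tendsto.mul_const (ENNReal.tendsto_ofReal tendsto_inv_atTop_zero)
        (Or.inr hsup.ne)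
    obtain ⟨T, hT, hTε⟩ := ((eventually_gt_atTop 0).and
      (hsmall.eventually (gt_mem_nhds (ENNReal.coe_pos.2 hε)))).exists
    refine ⟨fun x => ENNReal.ofReal (exp (α * T) * ‖x‖ ^ (-γ)), by fun_prop,
      ((hweight.const_mul _).lintegral_lt_top).ne, Eventually.of_forall fun j => ?_⟩
    refine (lintegral_ofReal_exp_mul_sq_le _ hα.le hT (by fun_prop) (by fun_prop)
      fun x => rpow_nonneg (norm_nonneg x) _).trans ?_
    gcongr
    exact (mul_le_mul_right (le_iSup_of_le j le_rfl) _).trans hTε.le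

/-- Let α > 0 and 0 ≤ γ < 2, and let Ω be a bounded measurable subset of ℝ².
If a sequence (u_j) of measurable functions converges a.e. on Ω to a measurable u and
sup_j ∫_Ω (u_j⁺)² e^{α (u_j⁺)²} |x|^{-γ} dx < ∞, then
∫_Ω e^{α (u_j⁺)²} |x|^{-γ} dx → ∫_Ω e^{α (u⁺)²} |x|^{-γ} dx. -/
theorem stmt_0 (α γ : ℝ) (hα : 0 < α) (hγ0 : 0 ≤ γ) (hγ2 : γ < 2)
    (Ω : Set (EuclideanSpace ℝ (Fin 2))) (hΩm : MeasurableSet Ω)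
    (hΩb : Bornology.IsBounded Ω)
    (u : ℕ → EuclideanSpace ℝ (Fin 2) → ℝ) (u₀ : EuclideanSpace ℝ (Fin 2) → ℝ)
    (hum : ∀ j, Measurable (u j)) (hu₀m : Measurable u₀)
    (hae : ∀ᵐ x ∂(volume.restrict Ω), Tendsto (fun j => u j x) atTop (𝓝 (u₀ x)))
    (hsup : (⨆ j, ∫⁻ x in Ω,
        ENNReal.ofReal ((max (u j x) 0) ^ 2 * Real.exp (α * (max (u j x) 0) ^ 2)
          * ‖x‖ ^ (-γ))) < ⊤) :
    Tendsto (fun j => ∫⁻ x in Ω,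
        ENNReal.ofReal (Real.exp (α * (max (u j x) 0) ^ 2) * ‖x‖ ^ (-γ))) atTop
      (𝓝 (∫⁻ x in Ω, ENNReal.ofReal (Real.exp (α * (max (u₀ x) 0) ^ 2) * ‖x‖ ^ (-γ)))) :=
  stmt_0_general α γ hα hγ2 Ω hΩb u u₀ hum hae hsup
end

section
/- Fix r > 0. There exists a constant C > 0 (depending only on r) such that for every integer j ≥ 2, the Moser function v_j satisfies ∫_{ℝ²} v_j(x)² dx ≤ C / log j. -/
/-!
Away from the origin, `v_j² ≤ 1_{|x|<r} log(r/|x|)² / (2π log j)`: this is an equality on the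
annulus `r/j < |x| < r`, and on the inner disc it follows from `log j ≤ log(r/|x|)`. The majorant
does not depend on `j` and is integrable, since `log(r/|x|)² ≤ 16 (r/|x|)^{1/2}` and `|x|^{-1/2}`
is integrable near the origin in any positive dimension.
-/

open MeasureTheory Real Filter Topology

/-- The Moser function `v_j` on ℝ²: `v_j(x) = (2π)^{-1/2} (log j)^{1/2}` if `|x| ≤ r/j`,
`v_j(x) = (2π)^{-1/2} log(r/|x|) / (log j)^{1/2}` if `r/j < |x| < r`, and `0` if `|x| ≥ r`. -/
noncomputable def moserFn (r : ℝ) (j : ℕ) (x : EuclideanSpace ℝ (Fin 2)) : ℝ :=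
  if ‖x‖ ≤ r / j then (2 * Real.pi) ^ (-(1 : ℝ) / 2) * (Real.log j) ^ ((1 : ℝ) / 2)
  else if ‖x‖ < r then
    (2 * Real.pi) ^ (-(1 : ℝ) / 2) * Real.log (r / ‖x‖) / (Real.log j) ^ ((1 : ℝ) / 2)
  else 0

open Metric Set

lemma rpow_one_div_two_sq {x : ℝ} (hx : 0 ≤ x) : (x ^ ((1 : ℝ) / 2)) ^ 2 = x := by
  rw [← sqrt_eq_rpow, sq_sqrt hx]

lemma rpow_neg_one_div_two_sq {x : ℝ} (hx : 0 ≤ x) : (x ^ (-(1 : ℝ) / 2)) ^ 2 = x⁻¹ := by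
  rw [neg_div, rpow_neg hx, inv_pow, rpow_one_div_two_sq hx]

lemma sq_log_le_sixteen_mul_rpow {s : ℝ} (hs : 1 ≤ s) :
    log s ^ 2 ≤ 16 * s ^ (1 / 2 : ℝ) := by
  have hlog : log s ≤ 4 * s ^ (1 / 4 : ℝ) := by
    have := log_le_rpow_div (by linarith) (by norm_num : (0 : ℝ) < 1 / 4)
    linarith
  have hsq : (s ^ (1 / 4 : ℝ)) ^ 2 = s ^ (1 / 2 : ℝ) := by
    rw [← rpow_natCast, ← rpow_mul (by linarith)]; norm_num
  calc log s ^ 2 ≤ (4 * s ^ (1 / 4 : ℝ)) ^ 2 := pow_le_pow_left₀ (log_nonneg hs) hlog 2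
    _ = 16 * s ^ (1 / 2 : ℝ) := by rw [mul_pow, hsq]; norm_num

section
variable {E : Type*} [NormedAddCommGroup E] [NormedSpace ℝ E] [FiniteDimensional ℝ E]
  [MeasurableSpace E] [BorelSpace E] [Nontrivial E] (μ : Measure E) [μ.IsAddHaarMeasure]

lemma integrableOn_ball_sq_log_div_norm (r : ℝ) :
    IntegrableOn (fun x : E => log (r / ‖x‖) ^ 2) (ball 0 r) μ := by
  refine integrableOn_ball_of_norm_le_rpow (C := 16 * r ^ (1 / 2 : ℝ)) (α := 1 / 2)
    Module.finrank_pos ?_ ?_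
    ((measurable_const.div measurable_norm).log.pow_const 2).aestronglyMeasurable
  · have : (1 : ℝ) ≤ Module.finrank ℝ E := by exact_mod_cast Module.finrank_pos
    linarith
  · filter_upwards [ae_restrict_mem measurableSet_ball] with x hx
    rw [mem_ball_zero_iff] at hx
    rcases eq_or_ne x 0 with rfl | hx0
    · -- both sides are junk zeros: `log (r / 0) = log 0 = 0` and `0 ^ (-1/2) = 0`
      simp
    have ht : 0 < ‖x‖ := norm_pos_iff.mpr hx0
    have hr : 0 < r := ht.trans hx
    rw [Real.norm_of_nonneg (sq_nonneg _), rpow_neg ht.le, mul_assoc, ← div_eq_mul_inv,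
      ← div_rpow hr.le ht.le]
    exact sq_log_le_sixteen_mul_rpow ((one_le_div ht).mpr hx.le)

end

lemma moserFn_sq_le {r : ℝ} {j : ℕ} (hj : 1 < j) {x : EuclideanSpace ℝ (Fin 2)}
    (hx : x ≠ 0) :
    moserFn r j x ^ 2 ≤
      (2 * π)⁻¹ * (ball 0 r).indicator (fun y => log (r / ‖y‖) ^ 2) x / log j := by
  have ht : 0 < ‖x‖ := norm_pos_iff.mpr hx
  have hj' : (1 : ℝ) < j := by exact_mod_cast hj
  have hlogj : 0 < log j := log_pos hj'
  unfold moserFn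
  split_ifs with hinner hmid
  · have hjr : j * ‖x‖ ≤ r := by rwa [le_div_iff₀ (by positivity), mul_comm] at hinner
    have hxr : ‖x‖ < r := by nlinarith
    have hlog : log j ≤ log (r / ‖x‖) :=
      log_le_log (by positivity) (by rw [le_div_iff₀ ht]; exact hjr)
    rw [indicator_of_mem (mem_ball_zero_iff.mpr hxr), mul_pow,
      rpow_neg_one_div_two_sq (by positivity), rpow_one_div_two_sq hlogj.le, mul_div_assoc]
    gcongr
    rw [le_div_iff₀ hlogj, ← sq]
    exact pow_le_pow_left₀ hlogj.le hlog 2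
  · rw [indicator_of_mem (mem_ball_zero_iff.mpr hmid), div_pow, mul_pow,
      rpow_neg_one_div_two_sq (by positivity), rpow_one_div_two_sq hlogj.le]
  · rw [indicator_of_notMem (by simpa using hmid)]
    simp

theorem stmt_5_general (r : ℝ) :
    ∃ C : ℝ, 0 < C ∧ ∀ j : ℕ, 2 ≤ j →
      ∫ x : EuclideanSpace ℝ (Fin 2), (moserFn r j x) ^ 2 ≤ C / Real.log j := by
  set g : EuclideanSpace ℝ (Fin 2) → ℝ := (ball 0 r).indicator fun y => log (r / ‖y‖) ^ 2
  have hg : Integrable g := (integrable_indicator_iff measurableSet_ball).mpr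
    (integrableOn_ball_sq_log_div_norm volume r)
  set I := ∫ x, g x
  have hI : 0 ≤ I := integral_nonneg fun x => indicator_nonneg (fun _ _ => sq_nonneg _) x
  refine ⟨(2 * π)⁻¹ * I + 1, by positivity, fun j hj => ?_⟩
  have hlogj : 0 < log j := log_pos (by exact_mod_cast hj)
  calc ∫ x, moserFn r j x ^ 2 ≤ ∫ x, (2 * π)⁻¹ * g x / log j :=
        integral_mono_of_nonneg (.of_forall fun _ => sq_nonneg _) ((hg.const_mul _).div_const _)
          ((volume.ae_ne 0).mono fun x hx => moserFn_sq_le hj hx)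
    _ = (2 * π)⁻¹ * I / log j := by rw [integral_div, integral_const_mul]
    _ ≤ ((2 * π)⁻¹ * I + 1) / log j := by gcongr; linarith

/-- For fixed r > 0 there is C > 0 such that for every integer j ≥ 2,
∫_{ℝ²} v_j(x)² dx ≤ C / log j. -/
theorem stmt_5 (r : ℝ) (hr : 0 < r) :
    ∃ C : ℝ, 0 < C ∧ ∀ j : ℕ, 2 ≤ j →
      ∫ x : EuclideanSpace ℝ (Fin 2), (moserFn r j x) ^ 2 ≤ C / Real.log j :=
  stmt_5_general r
end

section
/- Fix r > 0 and 0 ≤ γ < 2. For each integer j ≥ 2 set ε_j = ∫_{ℝ²} v_j(x)² dx. Then ∫_{{x ∈ ℝ² : |x| ≤ r/j}} v_j(x)² · exp( (4π (1 - γ/2) / (1 + ε_j)) · v_j(x)² ) · |x|^{-γ} dx tends to +∞ as j → ∞. -/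
open MeasureTheory Real Filter Topology

/-!
On the disc `‖x‖ ≤ r / j` the Moser function is constant, `v_j² = log j / (2π)`, so the integral
equals `(log j / 2π) · exp ((2 - γ) log j / (1 + ε_j)) · ∫_{‖x‖ ≤ r/j} ‖x‖^(-γ)`, which is at least
`(r^(2-γ) / 2) · log j · exp (-(2 - γ) ε_j log j)`. Everywhere `v_j² ≤ log² (r / ‖x‖) / (2π log j)`
on the ball of radius `r`, and `log² (r / ‖x‖)` is integrable there, so `ε_j log j` stays bounded
and the integrals grow like `log j`.
-/

open Metric Set

lemma sq_log_le_mul_rpow_half {u : ℝ} (hu : 1 ≤ u) : log u ^ 2 ≤ 16 * u ^ (1 / 2 : ℝ) := by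
  have hlog : log u ≤ u ^ (1 / 4 : ℝ) / (1 / 4) := log_le_rpow_div (by linarith) (by norm_num)
  have hsq : (u ^ (1 / 4 : ℝ)) ^ 2 = u ^ (1 / 2 : ℝ) := by
    rw [← rpow_natCast, ← rpow_mul (by linarith)]; norm_num
  nlinarith [log_nonneg hu]

section HaarMeasure

variable {E : Type*} [NormedAddCommGroup E] [NormedSpace ℝ E] [FiniteDimensional ℝ E]
  [MeasurableSpace E] [BorelSpace E] (μ : Measure E) [μ.IsAddHaarMeasure]

lemma integrable_indicator_closedBall_sq_log_div_norm [Nontrivial E] (r : ℝ) :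
    Integrable ((closedBall (0 : E) r).indicator fun x => log (r / ‖x‖) ^ 2) μ := by
  have hbound : ∀ x, ‖(closedBall (0 : E) r).indicator (fun x => log (r / ‖x‖) ^ 2) x‖
      ≤ 16 * |r| ^ (1 / 2 : ℝ) * ‖x‖ ^ (-(1 / 2 : ℝ)) := by
    intro x
    by_cases hx : x ∈ closedBall (0 : E) r ∧ x ≠ 0
    · obtain ⟨hxr, hx0⟩ := hx
      have hpos : 0 < ‖x‖ := norm_pos_iff.2 hx0
      have hle : ‖x‖ ≤ r := mem_closedBall_zero_iff.1 hxr
      rw [indicator_of_mem hxr, norm_of_nonneg (sq_nonneg _), abs_of_pos (hpos.trans_le hle),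
        rpow_neg hpos.le, mul_assoc, ← div_eq_mul_inv, ← div_rpow (by linarith) hpos.le]
      exact sq_log_le_mul_rpow_half ((one_le_div hpos).2 hle)
    · have hzero : (closedBall (0 : E) r).indicator (fun x => log (r / ‖x‖) ^ 2) x = 0 := by
        by_cases hxr : x ∈ closedBall (0 : E) r
        · simp [show x = 0 by tauto]
        · exact indicator_of_notMem hxr _
      rw [hzero, norm_zero]
      positivity
  have hdim : 1 ≤ Module.finrank ℝ E := Module.finrank_pos
  have hloc := locallyIntegrable_of_norm_le_rpow (μ := μ) hdim
    (by have : (1 : ℝ) ≤ Module.finrank ℝ E := mod_cast hdim; linarith) (ae_of_all _ hbound)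
    ((by fun_prop : Measurable fun x : E => log (r / ‖x‖) ^ 2).indicator
      measurableSet_closedBall).aestronglyMeasurable
  exact (integrable_indicator_iff measurableSet_closedBall).2
    ((hloc.integrableOn_isCompact (isCompact_closedBall 0 r)).congr_fun
      (fun x hx => indicator_of_mem hx _) measurableSet_closedBall)

lemma rpow_neg_mul_measureReal_closedBall_le_setIntegral {γ : ℝ} (hγ0 : 0 ≤ γ)
    (hγ : γ < Module.finrank ℝ E) (d : ℝ) :
    d ^ (-γ) * μ.real (closedBall 0 d) ≤ ∫ x in closedBall (0 : E) d, ‖x‖ ^ (-γ) ∂μ := by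
  have hdim : 1 ≤ Module.finrank ℝ E := by exact_mod_cast hγ0.trans_lt hγ
  have hint : IntegrableOn (fun x : E => ‖x‖ ^ (-γ)) (closedBall 0 d) μ :=
    (locallyIntegrable_of_norm_le_rpow (C := 1) hdim hγ
      (ae_of_all _ fun x => by simp [abs_of_nonneg (rpow_nonneg (norm_nonneg x) _)])
      (measurable_norm.pow_const _).aestronglyMeasurable).integrableOn_isCompact
        (isCompact_closedBall 0 d)
  have : Nontrivial E := Module.nontrivial_of_finrank_pos (R := ℝ) hdim
  calc d ^ (-γ) * μ.real (closedBall 0 d) = ∫ _ in closedBall (0 : E) d, d ^ (-γ) ∂μ := by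
        rw [setIntegral_const, smul_eq_mul, mul_comm]
    _ ≤ ∫ x in closedBall (0 : E) d, ‖x‖ ^ (-γ) ∂μ := by
      refine setIntegral_mono_on_ae (integrableOn_const measure_closedBall_lt_top.ne) hint
        measurableSet_closedBall ?_
      filter_upwards [Measure.ae_ne μ 0] with x hx0 hx
      exact rpow_le_rpow_of_nonpos (norm_pos_iff.2 hx0) (mem_closedBall_zero_iff.1 hx)
        (neg_nonpos.2 hγ0)

end HaarMeasure

lemma rpow_half_sq {a : ℝ} (ha : 0 ≤ a) : (a ^ ((1 : ℝ) / 2)) ^ 2 = a := by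
  rw [← sqrt_eq_rpow, sq_sqrt ha]

lemma rpow_neg_half_sq {a : ℝ} (ha : 0 ≤ a) : (a ^ (-(1 : ℝ) / 2)) ^ 2 = a⁻¹ := by
  rw [neg_div, rpow_neg ha, inv_pow, rpow_half_sq ha]

section moserFn

variable {r : ℝ} {j : ℕ} {x : EuclideanSpace ℝ (Fin 2)}

lemma moserFn_sq_of_norm_le (hx : ‖x‖ ≤ r / j) : moserFn r j x ^ 2 = log j / (2 * π) := by
  rw [moserFn, if_pos hx, mul_pow, rpow_neg_half_sq (by positivity),
    rpow_half_sq (log_natCast_nonneg j), inv_mul_eq_div]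

lemma moserFn_sq_of_lt_norm_of_norm_lt (h₁ : r / j < ‖x‖) (h₂ : ‖x‖ < r) :
    moserFn r j x ^ 2 = log (r / ‖x‖) ^ 2 / (2 * π * log j) := by
  rw [moserFn, if_neg h₁.not_ge, if_pos h₂, div_pow, mul_pow, rpow_neg_half_sq (by positivity),
    rpow_half_sq (log_natCast_nonneg j), inv_mul_eq_div, div_div]

lemma moserFn_eq_zero (h₁ : r / j < ‖x‖) (h₂ : r ≤ ‖x‖) : moserFn r j x = 0 := by
  rw [moserFn, if_neg h₁.not_ge, if_neg h₂.not_gt]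

-- At `x = 0` the right side is `0`, since `log (r / 0) = log 0 = 0`.
lemma moserFn_sq_le_indicator (hx : x ≠ 0) :
    moserFn r j x ^ 2 ≤
      (closedBall 0 r).indicator (fun y => log (r / ‖y‖) ^ 2) x / (2 * π * log j) := by
  have hpos : 0 < ‖x‖ := norm_pos_iff.2 hx
  rcases le_or_gt ‖x‖ (r / j) with h₁ | h₁
  · obtain ⟨hr, hj⟩ : 0 < r ∧ (0 : ℝ) < j :=
      (div_pos_iff.1 (hpos.trans_le h₁)).resolve_right fun h => (j.cast_nonneg).not_gt h.2
    have hjx : (j : ℝ) ≤ r / ‖x‖ := (le_div_iff₀ hpos).2 ((le_div_iff₀' hj).1 h₁)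
    have hxr : ‖x‖ ≤ r := h₁.trans (div_le_self hr.le (Nat.one_le_cast.2 (Nat.cast_pos.1 hj)))
    have hL : 0 ≤ log j := log_natCast_nonneg j
    rw [moserFn_sq_of_norm_le h₁, indicator_of_mem (mem_closedBall_zero_iff.2 hxr)]
    rcases hL.eq_or_lt with h0 | h0
    · simp [← h0]
    · calc log j / (2 * π) = log j ^ 2 / (2 * π * log j) := by field_simp
        _ ≤ log (r / ‖x‖) ^ 2 / (2 * π * log j) := by gcongr
  · rcases lt_or_ge ‖x‖ r with h₂ | h₂
    · rw [moserFn_sq_of_lt_norm_of_norm_lt h₁ h₂,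
        indicator_of_mem (mem_closedBall_zero_iff.2 h₂.le)]
    · rw [moserFn_eq_zero h₁ h₂, sq, zero_mul]
      have : 0 ≤ (closedBall 0 r).indicator (fun y => log (r / ‖y‖) ^ 2) x :=
        indicator_nonneg (fun _ _ => sq_nonneg _) _
      have := log_natCast_nonneg j
      positivity

lemma integral_moserFn_sq_le :
    ∫ x, moserFn r j x ^ 2 ≤
      (∫ x, (closedBall (0 : EuclideanSpace ℝ (Fin 2)) r).indicator
        (fun y => log (r / ‖y‖) ^ 2) x) / (2 * π * log j) := by
  rw [← integral_div]
  refine integral_mono_of_nonneg (ae_of_all _ fun _ => sq_nonneg _)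
    ((integrable_indicator_closedBall_sq_log_div_norm volume r).div_const _) ?_
  filter_upwards [Measure.ae_ne volume 0] with x hx using moserFn_sq_le_indicator hx

end moserFn

lemma mul_log_mul_exp_le_setIntegral_moserFn {r γ ε : ℝ} (hr : 0 < r) (hγ0 : 0 ≤ γ)
    (hγ2 : γ < 2) (hε : 0 ≤ ε) {j : ℕ} (hj : 0 < j) :
    r ^ (2 - γ) / 2 * log j * exp (-((2 - γ) * (ε * log j))) ≤
      ∫ x in {x : EuclideanSpace ℝ (Fin 2) | ‖x‖ ≤ r / j},
        moserFn r j x ^ 2 * exp (4 * π * (1 - γ / 2) / (1 + ε) * moserFn r j x ^ 2) *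
          ‖x‖ ^ (-γ) := by
  set L := log j
  have hL : 0 ≤ L := log_natCast_nonneg j
  have hj' : (0 : ℝ) < j := by exact_mod_cast hj
  have hd : 0 < r / j := div_pos hr hj'
  have hconst : ∫ x in {x : EuclideanSpace ℝ (Fin 2) | ‖x‖ ≤ r / j},
        moserFn r j x ^ 2 * exp (4 * π * (1 - γ / 2) / (1 + ε) * moserFn r j x ^ 2) *
          ‖x‖ ^ (-γ) =
      L / (2 * π) * exp ((2 - γ) * L / (1 + ε)) *
        ∫ x in closedBall (0 : EuclideanSpace ℝ (Fin 2)) (r / j), ‖x‖ ^ (-γ) := by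
    have hset : {x : EuclideanSpace ℝ (Fin 2) | ‖x‖ ≤ r / j} = closedBall 0 (r / j) := by
      ext; simp
    rw [hset, ← integral_const_mul]
    refine setIntegral_congr_fun measurableSet_closedBall fun x hx => ?_
    rw [moserFn_sq_of_norm_le (mem_closedBall_zero_iff.1 hx)]
    congr 3
    field_simp
    ring
  have hball : π * (r / j) ^ (2 - γ) ≤
      ∫ x in closedBall (0 : EuclideanSpace ℝ (Fin 2)) (r / j), ‖x‖ ^ (-γ) := by
    refine le_of_eq_of_le ?_ (rpow_neg_mul_measureReal_closedBall_le_setIntegral volume hγ0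
      (by simpa using hγ2) (r / j))
    rw [measureReal_def, EuclideanSpace.volume_closedBall_fin_two, ENNReal.toReal_mul,
      ENNReal.toReal_pow, ENNReal.toReal_ofReal hd.le, ENNReal.toReal_ofReal pi_pos.le,
      ← rpow_natCast,
      ← mul_assoc, ← rpow_add hd, mul_comm, Nat.cast_ofNat, neg_add_eq_sub]
  have hexp : (2 - γ) * L - (2 - γ) * (ε * L) ≤ (2 - γ) * L / (1 + ε) := by
    rw [le_div_iff₀ (by linarith)]
    nlinarith [mul_nonneg (mul_nonneg (sub_nonneg.2 hγ2.le) hL) (mul_nonneg hε hε)]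
  have hpow : (r / j) ^ (2 - γ) * exp ((2 - γ) * L) = r ^ (2 - γ) := by
    rw [div_rpow hr.le hj'.le, rpow_def_of_pos hj', mul_comm (log _)]
    exact div_mul_cancel₀ _ (exp_pos _).ne'
  calc r ^ (2 - γ) / 2 * L * exp (-((2 - γ) * (ε * L)))
      = L / (2 * π) * exp ((2 - γ) * L - (2 - γ) * (ε * L)) * (π * (r / j) ^ (2 - γ)) := by
        rw [← hpow, exp_sub, exp_neg]
        field_simp
    _ ≤ L / (2 * π) * exp ((2 - γ) * L / (1 + ε)) *
        ∫ x in closedBall (0 : EuclideanSpace ℝ (Fin 2)) (r / j), ‖x‖ ^ (-γ) := by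
        gcongr
    _ = _ := hconst.symm

/-- For r > 0 and 0 ≤ γ < 2, with ε_j = ∫_{ℝ²} v_j², the integrals
∫_{|x| ≤ r/j} v_j² exp((4π(1-γ/2)/(1+ε_j)) v_j²) |x|^{-γ} dx tend to +∞ as j → ∞. -/
theorem stmt_7 (r : ℝ) (hr : 0 < r) (γ : ℝ) (hγ0 : 0 ≤ γ) (hγ2 : γ < 2) :
    Tendsto (fun j : ℕ =>
        ∫ x in {x : EuclideanSpace ℝ (Fin 2) | ‖x‖ ≤ r / j},
          (moserFn r j x) ^ 2 *
            Real.exp ((4 * π * (1 - γ / 2) /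
                (1 + ∫ y : EuclideanSpace ℝ (Fin 2), (moserFn r j y) ^ 2)) *
              (moserFn r j x) ^ 2) * ‖x‖ ^ (-γ))
      atTop atTop := by
  set C := (∫ x, (closedBall (0 : EuclideanSpace ℝ (Fin 2)) r).indicator
    (fun y => log (r / ‖y‖) ^ 2) x) / (2 * π) with hCdef
  have hC : 0 ≤ C := div_nonneg (integral_nonneg (indicator_nonneg fun _ _ => sq_nonneg _))
    (by positivity)
  have hlog : Tendsto (fun j : ℕ => r ^ (2 - γ) / 2 * exp (-(2 * C)) * log j) atTop atTop :=
    (tendsto_log_atTop.comp tendsto_natCast_atTop_atTop).const_mul_atTop (by positivity)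
  refine tendsto_atTop_mono' atTop ?_ hlog
  filter_upwards [eventually_ge_atTop 2] with j hj
  have hL : 0 < log j := log_pos (by exact_mod_cast hj)
  have hε : 0 ≤ ∫ y : EuclideanSpace ℝ (Fin 2), moserFn r j y ^ 2 :=
    integral_nonneg fun _ => sq_nonneg _
  have hεL : (∫ y : EuclideanSpace ℝ (Fin 2), moserFn r j y ^ 2) * log j ≤ C := by
    calc (∫ y : EuclideanSpace ℝ (Fin 2), moserFn r j y ^ 2) * log j
        ≤ (∫ x, (closedBall (0 : EuclideanSpace ℝ (Fin 2)) r).indicator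
            (fun y => log (r / ‖y‖) ^ 2) x) / (2 * π * log j) * log j := by
          gcongr
          exact integral_moserFn_sq_le
      _ = C := by rw [hCdef]; field_simp
  refine le_trans ?_ (mul_log_mul_exp_le_setIntegral_moserFn hr hγ0 hγ2 hε (by omega))
  rw [mul_right_comm]
  gcongr
  nlinarith [mul_nonneg hε hL.le]
end
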